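/- Let A be a commutative *-subalgebra of Matrix n n ℂ (closed under adjoints, containing 1). Then all elements of A are simultaneously diagonalizable: there exists a unitary U such that U* * a * U is diagonal for every a ∈ A. -/

import Mathlib

/-!
The hermitian elements of `A` form a commuting family of self-adjoint operators on
`EuclideanSpace ℂ n`, so the space is the orthogonal direct sum of their joint eigenspaces, and an
orthonormal basis subordinate to this decomposition consists of common eigenvectors. The unitary
with these columns diagonalises every hermitian element of `A`. An arbitrary element of `A` is
`ℜ a + I • ℑ a` with `ℜ a, ℑ a` hermitian elements of `A`, and conjugation is linear.
-/

open scoped Matrix Function ComplexStarModule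
open Module.End

theorem LinearMap.IsSymmetric.exists_orthonormalBasis_eigenvectors_of_pairwise_commute
    {𝕜 E ι n : Type*} [RCLike 𝕜] [NormedAddCommGroup E] [InnerProductSpace 𝕜 E]
    [FiniteDimensional 𝕜 E] [Fintype n] {T : ι → E →ₗ[𝕜] E}
    (hT : ∀ i, (T i).IsSymmetric) (hC : Pairwise (Commute on T))
    (hn : Module.finrank 𝕜 E = Fintype.card n) :
    ∃ b : OrthonormalBasis n 𝕜 E, ∀ i k, ∃ μ : 𝕜, T i (b k) = μ • b k := by
  classical
  let V : (ι → 𝕜) → Submodule 𝕜 E := fun χ ↦ ⨅ i, eigenspace (T i) (χ i)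
  have hV : DirectSum.IsInternal V := directSum_isInternal_of_pairwise_commute hT hC
  -- `subordinateOrthonormalBasis` needs a finite index, so keep only the nonzero joint eigenspaces
  let κ := {χ // V χ ≠ ⊥}
  have : Fintype κ := hV.submodule_iSupIndep.fintypeNeBotOfFiniteDimensional
  have hV' : DirectSum.IsInternal fun χ : κ ↦ V χ := DirectSum.isInternal_ne_bot_iff.mpr hV
  have hO := (orthogonalFamily_iInf_eigenspaces hT).comp (Subtype.val_injective (p := (V · ≠ ⊥)))
  refine ⟨(hV'.subordinateOrthonormalBasis hn hO).reindex (Fintype.equivFin n).symm,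
    fun i k ↦ ?_⟩
  have hmem := hV'.subordinateOrthonormalBasis_subordinate hn (Fintype.equivFin n k) hO
  rw [OrthonormalBasis.reindex_apply, Equiv.symm_symm]
  exact ⟨_, mem_eigenspace_iff.mp ((Submodule.mem_iInf _).mp hmem i)⟩

namespace Matrix

theorem isDiag_conjTranspose_mul_mul_of_mulVec_col {R n : Type*} [CommRing R] [StarRing R]
    [Fintype n] [DecidableEq n] (U : unitaryGroup n R) (a : Matrix n n R)
    (h : ∀ k, ∃ μ : R, a *ᵥ (U : Matrix n n R).col k = μ • (U : Matrix n n R).col k) :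
    ((U : Matrix n n R)ᴴ * a * U).IsDiag := by
  intro j k hjk
  obtain ⟨μ, hμ⟩ := h k
  have hk : ((U : Matrix n n R)ᴴ * a * (U : Matrix n n R)) *ᵥ Pi.single k 1 =
      μ • Pi.single k 1 := by
    rw [← mulVec_mulVec, mulVec_single_one, ← mulVec_mulVec, hμ, mulVec_smul,
      ← mulVec_single_one, mulVec_mulVec, ← star_eq_conjTranspose, Unitary.coe_star_mul_self,
      one_mulVec]
  simpa [mulVec_single_one, hjk] using congrFun hk j

theorem exists_unitary_forall_isDiag_of_pairwise_commute {𝕜 n : Type*} [RCLike 𝕜]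
    [Fintype n] [DecidableEq n] {S : Set (Matrix n n 𝕜)} (hS : ∀ a ∈ S, a.IsHermitian)
    (hC : S.Pairwise Commute) :
    ∃ U : unitaryGroup n 𝕜, ∀ a ∈ S, ((U : Matrix n n 𝕜)ᴴ * a * U).IsDiag := by
  obtain ⟨b, hb⟩ :=
    LinearMap.IsSymmetric.exists_orthonormalBasis_eigenvectors_of_pairwise_commute
      (T := fun a : S ↦ toEuclideanLin a.1)
      (fun a ↦ isSymmetric_toEuclideanLin_iff.mpr (hS _ a.2))
      (fun a b hab ↦ (hC a.2 b.2 (Subtype.coe_ne_coe.mpr hab)).map (toLpLinAlgEquiv 2))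
      finrank_euclideanSpace
  refine ⟨⟨_, (EuclideanSpace.basisFun n 𝕜).toMatrix_orthonormalBasis_mem_unitary b⟩,
    fun a ha ↦ isDiag_conjTranspose_mul_mul_of_mulVec_col _ a fun k ↦ ?_⟩
  obtain ⟨μ, hμ⟩ := hb ⟨a, ha⟩ k
  exact ⟨μ, congrArg WithLp.ofLp hμ⟩

end Matrix

namespace StarSubalgebra

variable {M : Type*} [Ring M] [StarRing M] [Algebra ℂ M] [StarModule ℂ M]
  {A : StarSubalgebra ℂ M} {a : M}

theorem realPart_mem (ha : a ∈ A) : (ℜ a : M) ∈ A := by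
  rw [realPart_apply_coe]
  exact A.smul_mem (add_mem ha (star_mem ha)) (2⁻¹ : ℝ)

theorem imaginaryPart_mem (ha : a ∈ A) : (ℑ a : M) ∈ A := by
  rw [imaginaryPart_apply_coe]
  exact A.smul_mem (A.smul_mem (sub_mem ha (star_mem ha)) (2⁻¹ : ℝ)) (-Complex.I)

end StarSubalgebra

theorem stmt_13 {n : Type*} [Fintype n] [DecidableEq n]
    (A : StarSubalgebra ℂ (Matrix n n ℂ))
    (hcomm : ∀ a ∈ A, ∀ b ∈ A, a * b = b * a) :
    ∃ U : Matrix.unitaryGroup n ℂ,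
      ∀ a ∈ A, ((U : Matrix n n ℂ)ᴴ * a * (U : Matrix n n ℂ)).IsDiag := by
  obtain ⟨U, hU⟩ := Matrix.exists_unitary_forall_isDiag_of_pairwise_commute
    (S := {a | a ∈ A ∧ a.IsHermitian}) (fun _ ha ↦ ha.2)
    (fun a ha b hb _ ↦ hcomm a ha.1 b hb.1)
  refine ⟨U, fun a ha ↦ ?_⟩
  rw [← realPart_add_I_smul_imaginaryPart a, Matrix.mul_add, Matrix.add_mul, Matrix.mul_smul,
    Matrix.smul_mul]
  exact (hU _ ⟨A.realPart_mem ha, (ℜ a).2⟩).add ((hU _ ⟨A.imaginaryPart_mem ha, (ℑ a).2⟩).smul _)
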